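/- arXiv:2209.14215 — 2 statements merged into one kernel-verified Lean document; each statement's English description precedes it below -/
import Mathlib

section
/- Let ψ : ℂ → ℂ be differentiable in the real sense. Then ψ satisfies the lowest Landau level equation ∂̄ψ(z) = −(z/2)·ψ(z) for all z ∈ ℂ if and only if there exists an entire function φ : ℂ → ℂ such that ψ(z) = φ(z) · e^{−|z|²/2} for all z. (Characterization of the lowest Landau level as Bargmann space.) -/
/-!
Multiplying by the Gaussian `G_a(w) = exp (a w w̄)` conjugates `∂̄` into `∂̄ + a z`:
`∂̄(f G_a) = (∂̄f + a z f) G_a`. For `a = 1/2` the lowest Landau level equation for `ψ`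
therefore says exactly that `∂̄(ψ G_{1/2}) = 0`, i.e. (Cauchy–Riemann) that `φ = ψ G_{1/2}`
is entire, and `ψ = φ G_{-1/2} = φ e^{-|z|²/2}`.
-/

open MeasureTheory

/-- The antiholomorphic Wirtinger derivative `∂̄f(z) = (Df(z)(1) + i·Df(z)(i))/2`. -/
noncomputable def wirtingerDBar (f : ℂ → ℂ) (z : ℂ) : ℂ :=
  (fderiv ℝ f z 1 + Complex.I * fderiv ℝ f z Complex.I) / 2

section Wirtinger

open Complex ComplexConjugate

theorem wirtingerDBar_eq_zero_iff {f : ℂ → ℂ} {z : ℂ} (hf : DifferentiableAt ℝ f z) :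
    wirtingerDBar f z = 0 ↔ DifferentiableAt ℂ f z := by
  rw [differentiableAt_complex_iff_differentiableAt_real, wirtingerDBar, smul_eq_mul,
    and_iff_right hf]
  constructor <;> intro h
  · linear_combination (-2 * I) * h + fderiv ℝ f z I * I_mul_I
  · linear_combination (I / 2) * h + fderiv ℝ f z 1 / 2 * I_mul_I

theorem wirtingerDBar_mul {f g : ℂ → ℂ} {z : ℂ} (hf : DifferentiableAt ℝ f z)
    (hg : DifferentiableAt ℝ g z) :
    wirtingerDBar (fun w => f w * g w) z =
      wirtingerDBar f z * g z + f z * wirtingerDBar g z := by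
  simp only [wirtingerDBar, fderiv_fun_mul hf hg, add_apply, smul_apply, smul_eq_mul]
  ring

/-- `exp (a |w|²)`, written with `w * conj w` so that its real derivative is a product rule. -/
noncomputable def gaussian (a w : ℂ) : ℂ :=
  exp (a * (w * conj w))

theorem hasFDerivAt_gaussian (a z : ℂ) :
    HasFDerivAt (gaussian a)
      (gaussian a z • a •
        (z • conjCLE.toContinuousLinearMap + conj z • ContinuousLinearMap.id ℝ ℂ)) z :=
  (((hasFDerivAt_id z).fun_mul conjCLE.hasFDerivAt).const_mul a).cexp

theorem differentiable_gaussian (a : ℂ) : Differentiable ℝ (gaussian a) :=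
  fun z => (hasFDerivAt_gaussian a z).differentiableAt

theorem wirtingerDBar_gaussian (a z : ℂ) :
    wirtingerDBar (gaussian a) z = a * z * gaussian a z := by
  simp only [wirtingerDBar, (hasFDerivAt_gaussian a z).fderiv, smul_apply,
    add_apply, ContinuousLinearEquiv.coe_coe, conjCLE_apply,
    ContinuousLinearMap.id_apply, smul_eq_mul, map_one, conj_I]
  linear_combination gaussian a z * a * (conj z - z) / 2 * I_mul_I

theorem wirtingerDBar_mul_gaussian {f : ℂ → ℂ} {z : ℂ} (hf : DifferentiableAt ℝ f z)
    (a : ℂ) :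
    wirtingerDBar (fun w => f w * gaussian a w) z =
      (wirtingerDBar f z + a * z * f z) * gaussian a z := by
  rw [wirtingerDBar_mul hf (differentiable_gaussian a z), wirtingerDBar_gaussian]
  ring

theorem gaussian_mul_gaussian_neg (a w : ℂ) : gaussian a w * gaussian (-a) w = 1 := by
  rw [gaussian, gaussian, ← exp_add, neg_mul, add_neg_cancel, exp_zero]

theorem ofReal_exp_neg_norm_sq_div_two (w : ℂ) :
    (Real.exp (-(‖w‖ ^ 2) / 2) : ℂ) = gaussian (-1 / 2) w := by
  rw [gaussian, ofReal_exp, mul_conj, normSq_eq_norm_sq]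
  push_cast
  ring_nf

end Wirtinger

/-- Characterization of the lowest Landau level as Bargmann space: a real-differentiable
`ψ : ℂ → ℂ` satisfies `∂̄ψ(z) = −(z/2)ψ(z)` for all `z` iff `ψ(z) = φ(z) e^(−|z|²/2)`
for some entire function `φ`. -/
theorem lowest_landau_level_iff_bargmann (ψ : ℂ → ℂ) (hψ : Differentiable ℝ ψ) :
    (∀ z : ℂ, wirtingerDBar ψ z = -(z / 2) * ψ z) ↔
    ∃ φ : ℂ → ℂ, Differentiable ℂ φ ∧
      ∀ z : ℂ, ψ z = φ z * (Real.exp (-(‖z‖ ^ 2) / 2) : ℂ) := by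
  simp only [ofReal_exp_neg_norm_sq_div_two]
  constructor
  · intro hLLL
    refine ⟨fun w => ψ w * gaussian (1 / 2) w, fun z => ?_, fun z => ?_⟩
    · rw [← wirtingerDBar_eq_zero_iff ((hψ z).fun_mul (differentiable_gaussian _ z)),
        wirtingerDBar_mul_gaussian (hψ z), hLLL]
      ring
    · rw [mul_assoc, show (-1 / 2 : ℂ) = -(1 / 2) by ring, gaussian_mul_gaussian_neg, mul_one]
  · rintro ⟨φ, hφ, hψφ⟩ z
    obtain rfl : ψ = fun w => φ w * gaussian (-1 / 2) w := funext hψφ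
    rw [wirtingerDBar_mul_gaussian ((hφ z).restrictScalars ℝ),
      (wirtingerDBar_eq_zero_iff ((hφ z).restrictScalars ℝ)).2 (hφ z)]
    ring
end

section
/- Let N ≥ 2 and let ψ ∈ MvPolynomial (Fin N) ℂ be symmetric (invariant under every permutation of the variables). Suppose that for every pair of distinct indices i ≠ j, the polynomial obtained from ψ by substituting X_j for X_i is zero (i.e. ψ vanishes on the hyperplane z_i = z_j). Then the Laughlin polynomial ∏_{i<j} (X_i − X_j)² divides ψ. (Characterization of fully correlated states: every bosonic state in the kernel of the contact interaction is a symmetric analytic multiple of the Laughlin state.) -/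
/-!
Vanishing on the hyperplane `z_i = z_j` means `X i - X j ∣ ψ`: modulo `X i - X j` the
substitution `X i ↦ X j` is the identity. Writing `ψ = (X i - X j) * q`, invariance of `ψ` under
the transposition `(i j)` makes `q` antisymmetric in `i, j`, so `q` vanishes on `z_i = z_j` as
well (as `2 ≠ 0`), whence `(X i - X j) ^ 2 ∣ ψ`. The linear forms `X i - X j` with `i < j` are
pairwise non-associated primes, so their squares are pairwise coprime in the factorial ring
`ℂ[X_0, …, X_{N-1}]` and their product, the Laughlin polynomial, divides `ψ`.
-/

open MvPolynomial

/-- The Laughlin polynomial `∏_{i<j} (X_i − X_j)²` in `N` variables. -/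
noncomputable def laughlin (N : ℕ) : MvPolynomial (Fin N) ℂ :=
  ∏ p ∈ Finset.univ.filter (fun p : Fin N × Fin N => p.1 < p.2),
    (X p.1 - X p.2) ^ 2

namespace MvPolynomial

variable {R σ : Type*}

section CommRing

variable [CommRing R]

theorem dvd_sub_aeval_of_forall_dvd {d : MvPolynomial σ R} {f : σ → MvPolynomial σ R}
    (hf : ∀ k, d ∣ X k - f k) (p : MvPolynomial σ R) : d ∣ p - aeval f p := by
  rw [← Ideal.mem_span_singleton, ← Ideal.Quotient.eq]
  have hcomp : (Ideal.Quotient.mkₐ R (Ideal.span {d})).comp (aeval f) =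
      Ideal.Quotient.mkₐ R (Ideal.span {d}) := by
    ext k
    simpa [Ideal.Quotient.eq, Ideal.mem_span_singleton] using dvd_sub_comm.mp (hf k)
  exact (AlgHom.congr_fun hcomp p).symm

theorem X_sub_X_dvd_of_aeval_eq_zero [DecidableEq σ] {i j : σ} {p : MvPolynomial σ R}
    (hp : aeval (fun k => if k = i then X j else X k : σ → MvPolynomial σ R) p = 0) :
    X i - X j ∣ p := by
  have h := dvd_sub_aeval_of_forall_dvd (d := X i - X j)
    (f := fun k => if k = i then X j else X k) (fun k => by split_ifs with hk <;> simp [hk]) p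
  rwa [hp, sub_zero] at h

theorem sym2_eq_of_X_sub_X_dvd [Nontrivial R] {a b c d : σ} (hcd : c ≠ d)
    (h : (X a - X b : MvPolynomial σ R) ∣ X c - X d) : s(c, d) = s(a, b) := by
  classical
  -- renaming `X b` to `X a` kills the divisor
  have hr := map_dvd (rename fun k => if k = b then a else k) h
  simp only [map_sub, rename_X, ite_self, ↓reduceIte, sub_self, zero_dvd_iff, sub_eq_zero,
    X_inj] at hr
  split_ifs at hr <;> grind

end CommRing

section IsDomain

variable [CommRing R] [IsDomain R]

theorem prime_X_sub_X {i j : σ} (hij : i ≠ j) : Prime (X i - X j : MvPolynomial σ R) := by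
  classical
  let e := (renameEquiv R (Equiv.optionSubtypeNe i).symm).trans (optionEquivLeft R {k // k ≠ i})
  have he : e (X i - X j) = Polynomial.X - Polynomial.C (X ⟨j, hij.symm⟩) := by
    simp [e, Equiv.optionSubtypeNe_symm_of_ne hij.symm, optionEquivLeft_X_some,
      optionEquivLeft_X_none]
  rw [← MulEquiv.prime_iff e.toMulEquiv]
  exact he ▸ Polynomial.prime_X_sub_C _

theorem sq_X_sub_X_dvd_of_swap_invariant [DecidableEq σ] [NeZero (2 : R)] {i j : σ}
    (hij : i ≠ j) {p : MvPolynomial σ R} (hswap : rename (Equiv.swap i j) p = p)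
    (hp : aeval (fun k => if k = i then X j else X k : σ → MvPolynomial σ R) p = 0) :
    (X i - X j) ^ 2 ∣ p := by
  obtain ⟨q, rfl⟩ := X_sub_X_dvd_of_aeval_eq_zero hp
  have hq : rename (Equiv.swap i j) q = -q := by
    refine mul_left_cancel₀ (prime_X_sub_X hij).ne_zero ?_
    calc (X i - X j) * rename (Equiv.swap i j) q
        = -rename (Equiv.swap i j) ((X i - X j) * q) := by
          simp only [map_mul, map_sub, rename_X, Equiv.swap_apply_left, Equiv.swap_apply_right]
          ring
      _ = (X i - X j) * -q := by rw [hswap]; ring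
  set v : σ → MvPolynomial σ R := fun k => if k = i then X j else X k
  have hv : v ∘ Equiv.swap i j = v := by
    funext k
    rcases eq_or_ne k i with rfl | hki
    · simp [v, hij.symm]
    rcases eq_or_ne k j with rfl | hkj
    · simp [v]
    · simp [v, Equiv.swap_apply_of_ne_of_ne hki hkj]
  have hq0 : aeval v q = 0 := by
    have h2 : (2 : MvPolynomial σ R) ≠ 0 := by
      simpa only [map_ofNat, C_0] using (C_injective σ R).ne (two_ne_zero (α := R))
    have hneg : aeval v q = -aeval v q := by
      rw [← map_neg, ← hq, aeval_rename, hv]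
    rwa [eq_neg_iff_add_eq_zero, ← two_mul, mul_eq_zero, or_iff_right h2] at hneg
  obtain ⟨r, rfl⟩ := X_sub_X_dvd_of_aeval_eq_zero hq0
  exact ⟨r, by ring⟩

open Function in
theorem pairwise_isRelPrime_X_sub_X [LinearOrder σ] :
    {p : σ × σ | p.1 < p.2}.Pairwise
      (IsRelPrime on fun p : σ × σ => (X p.1 - X p.2 : MvPolynomial σ R)) := by
  rintro p hp q hq hpq
  refine (prime_X_sub_X hp.ne).irreducible.isRelPrime_iff_not_dvd.mpr fun h => hpq ?_
  rcases Sym2.eq_iff.mp (sym2_eq_of_X_sub_X_dvd hq.ne h) with ⟨h1, h2⟩ | ⟨h1, h2⟩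
  · exact Prod.ext h1.symm h2.symm
  · exact (lt_asymm hp (h1 ▸ h2 ▸ hq)).elim

end IsDomain

end MvPolynomial

theorem fully_correlated_divisible_by_laughlin_general (N : ℕ)
    (ψ : MvPolynomial (Fin N) ℂ)
    (hsymm : ∀ σ : Equiv.Perm (Fin N), rename σ ψ = ψ)
    (hvanish : ∀ i j : Fin N, i ≠ j →
      aeval (fun k : Fin N => if k = i then X j else X k) ψ = (0 : MvPolynomial (Fin N) ℂ)) :
    laughlin N ∣ ψ := by
  refine Finset.prod_dvd_of_isRelPrime (fun p hp q hq hpq => ?_) fun p hp => ?_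
  · exact (pairwise_isRelPrime_X_sub_X (by simpa using hp) (by simpa using hq) hpq).pow
  · have hp : p.1 ≠ p.2 := (Finset.mem_filter.mp hp).2.ne
    exact sq_X_sub_X_dvd_of_swap_invariant hp (hsymm _) (hvanish _ _ hp)

/-- Characterization of fully correlated states: a symmetric polynomial `ψ` in `N ≥ 2`
variables vanishing on every diagonal hyperplane `z_i = z_j` is divisible by the
Laughlin polynomial `∏_{i<j} (X_i − X_j)²`. -/
theorem fully_correlated_divisible_by_laughlin (N : ℕ) (hN : 2 ≤ N)
    (ψ : MvPolynomial (Fin N) ℂ)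
    (hsymm : ∀ σ : Equiv.Perm (Fin N), rename σ ψ = ψ)
    (hvanish : ∀ i j : Fin N, i ≠ j →
      aeval (fun k : Fin N => if k = i then X j else X k) ψ = (0 : MvPolynomial (Fin N) ℂ)) :
    laughlin N ∣ ψ :=
  fully_correlated_divisible_by_laughlin_general N ψ hsymm hvanish
end
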